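/- arXiv:2010.15489 — 2 statements merged into one kernel-verified Lean document; each statement's English description precedes it below -/
import Mathlib

section
/- Let V be a ℚ-vector space, g : V → V a ℚ-linear endomorphism, h ≥ 1 a natural number with g^h = id_V, and q a natural number with q ≥ 2. Let φ : V → ℚ be a linear functional and v ∈ V. Assume that for every i < h the value φ(g^i(v)) is an integer of absolute value at most q − 1, and that φ(g^{i}(v)) ≠ 0 for at least one i < h. Then the endomorphism q • g − id_V is bijective, and every w ∈ V satisfying q • g(w) − w = v has φ(w) ≠ 0. -/
/-!
Put `F = q • g`, so that `F ^ h = q ^ h • 1`. The geometric sum `S = ∑_{i<h} F ^ i` satisfies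
`(F - 1) * S = S * (F - 1) = (q ^ h - 1) • 1`, so `F - 1` is invertible and `(F - 1) w = v`
gives `(q ^ h - 1) * φ w = ∑_{i<h} q ^ i * φ (g ^ i v)`. The right-hand side is an integer
written in base `q` with signed digits `φ (g ^ i v)` of absolute value less than `q`, not all
zero, so it does not vanish.
-/

open Finset

theorem Int.eq_zero_of_sum_range_pow_mul_eq_zero {q : ℤ} :
    ∀ {h : ℕ} {n : ℕ → ℤ}, (∀ i < h, |n i| < q) →
      ∑ i ∈ Finset.range h, q ^ i * n i = 0 → ∀ i < h, n i = 0
  | 0, _, _, _ => fun _ hi => absurd hi (Nat.not_lt_zero _)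
  | h + 1, n, hb, hsum => by
    rw [sum_range_succ', pow_zero, one_mul] at hsum
    simp_rw [pow_succ', mul_assoc] at hsum
    rw [← mul_sum] at hsum
    have hn0 : n 0 = 0 := by
      refine Int.eq_zero_of_abs_lt_dvd ⟨-∑ i ∈ Finset.range h, q ^ i * n (i + 1), ?_⟩
        (hb 0 h.succ_pos)
      linarith
    have hq : q ≠ 0 := (lt_of_le_of_lt (abs_nonneg _) (hb 0 h.succ_pos)).ne'
    have htail : ∀ i < h, n (i + 1) = 0 :=
      eq_zero_of_sum_range_pow_mul_eq_zero (fun i hi => hb (i + 1) (by omega))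
        (by simpa [hn0, hq] using hsum)
    rintro (_ | i) hi
    · exact hn0
    · exact htail i (by omega)

theorem isUnit_sub_one_of_pow_eq_smul_one {K A : Type*} [Field K] [Ring A] [Algebra K A]
    {x : A} {h : ℕ} {c : K} (hx : x ^ h = c • 1) (hc : c ≠ 1) : IsUnit (x - 1) := by
  have hc' : c - 1 ≠ 0 := sub_ne_zero.mpr hc
  have hcancel : (c - 1)⁻¹ • (x ^ h - 1) = 1 := by
    rw [hx, ← one_smul K (1 : A), smul_smul, mul_one, ← sub_smul, smul_smul,
      inv_mul_cancel₀ hc', one_smul]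
  refine ⟨⟨x - 1, (c - 1)⁻¹ • ∑ i ∈ range h, x ^ i, ?_, ?_⟩, rfl⟩
  · rw [mul_smul_comm, mul_geom_sum, hcancel]
  · rw [smul_mul_assoc, geom_sum_mul, hcancel]

theorem Module.End.sub_one_smul_eq_sum_pow_apply {R M : Type*} [CommRing R] [AddCommGroup M]
    [Module R M] {f : Module.End R M} {h : ℕ} {c : R} (hf : f ^ h = c • 1) {v w : M}
    (hw : (f - 1) w = v) : (c - 1) • w = ∑ i ∈ range h, (f ^ i) v := by
  calc (c - 1) • w = (c • 1 - 1 : Module.End R M) w := by simp [sub_smul]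
    _ = ((∑ i ∈ range h, f ^ i) * (f - 1)) w := by rw [geom_sum_mul, hf]
    _ = ∑ i ∈ range h, (f ^ i) v := by rw [Module.End.mul_apply, hw, LinearMap.sum_apply]

/-- The linear-algebraic and arithmetic core of the proof of Proposition 5.2: if `g` has
finite order `h` on a `ℚ`-vector space `V`, `q ≥ 2`, and the values `φ (g^i v)` for `i < h`
are integers bounded in absolute value by `q - 1` and not all zero, then `q • g - id` is
bijective and any `w` with `q • g w - w = v` satisfies `φ w ≠ 0`. -/
theorem stmt_5 (V : Type*) [AddCommGroup V] [Module ℚ V]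
    (g : V →ₗ[ℚ] V) (h : ℕ) (hh : 1 ≤ h) (hg : g ^ h = 1)
    (q : ℕ) (hq : 2 ≤ q)
    (φ : V →ₗ[ℚ] ℚ) (v : V)
    (hint : ∀ i < h, ∃ n : ℤ, φ ((g ^ i) v) = (n : ℚ) ∧ |n| ≤ (q : ℤ) - 1)
    (hnz : ∃ i < h, φ ((g ^ i) v) ≠ 0) :
    Function.Bijective ((q : ℚ) • g - 1 : V →ₗ[ℚ] V) ∧
    ∀ w : V, (q : ℚ) • g w - w = v → φ w ≠ 0 := by
  have hpow : ((q : ℚ) • g) ^ h = ((q : ℚ) ^ h) • 1 := by rw [smul_pow, hg]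
  have hqh : (q : ℚ) ^ h ≠ 1 :=
    (one_lt_pow₀ (by exact_mod_cast hq : (1 : ℚ) < q) (by omega)).ne'
  refine ⟨(Module.End.isUnit_iff _).mp (isUnit_sub_one_of_pow_eq_smul_one hpow hqh),
    fun w hw hφw => ?_⟩
  choose! n hn using hint
  have hsum : ((q : ℚ) ^ h - 1) * φ w = ((∑ i ∈ range h, (q : ℤ) ^ i * n i : ℤ) : ℚ) := by
    rw [← smul_eq_mul, ← map_smul, Module.End.sub_one_smul_eq_sum_pow_apply hpow hw, map_sum]
    push_cast
    refine sum_congr rfl fun i hi => ?_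
    rw [smul_pow, LinearMap.smul_apply, map_smul, smul_eq_mul, (hn i (mem_range.mp hi)).1]
  rw [hφw, mul_zero, eq_comm, Int.cast_eq_zero] at hsum
  obtain ⟨i, hi, hφi⟩ := hnz
  have hdigits := Int.eq_zero_of_sum_range_pow_mul_eq_zero (q := q)
    (fun j hj => by linarith [(hn j hj).2]) hsum i hi
  exact hφi (by rw [(hn i hi).1, hdigits, Int.cast_zero])
end

section
/- Let (W, S) be a Coxeter system with length function ℓ, and let σ : W → W be a group automorphism mapping the set S of simple reflections bijectively onto itself. Let J and K be subsets of S which are stable under σ (σ(J) = J and σ(K) = K), and let W_J and W_K denote the subgroups of W generated by J and K respectively. Suppose x ∈ W has minimal length in its double coset W_K x W_J, i.e. ℓ(x) ≤ ℓ(z · x · y) for all z ∈ W_K and y ∈ W_J. If there exist y ∈ W_J and z ∈ W_K with x · y = z · σ(x), then ℓ(y) = ℓ(z) and σ(x) = x. -/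
/-!
Tits' sign argument gives the exchange property: the simple reflections act on `W × ZMod 2` by
`(t, ε) ↦ (sᵢ t sᵢ, ε + [t = sᵢ])`, these maps satisfy the Coxeter relations, and so the parity
of the number of occurrences of a reflection `t` in the right inversion sequence of a word only
depends on the product `w` of the word; hence every right inversion of `w` occurs in it.

With exchange, a minimal `x` in `x W_J` satisfies `ℓ(xy) = ℓ x + ℓ y` for `y ∈ W_J`, and two
minimal elements `x, u` of one double coset `W_K x W_J` with `x y = z u` are equal, by induction
on `ℓ y`: the last letter of `y` is a right descent of `z u`, and exchange deletes it from a
reduced word for `z ∈ W_K`, since the minimality of `u` forbids deleting it from `u`. As `σ`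
preserves length, `W_J` and `W_K`, the element `σ x` is minimal in the double coset of `x`, hence
equal to `x`, and comparing `ℓ(xy) = ℓ x + ℓ y` with `ℓ(z σx) = ℓ z + ℓ x` gives `ℓ y = ℓ z`.
-/

namespace CoxeterSystem

open List
open scoped Classical

variable {B W : Type*} [Group W] {M : CoxeterMatrix B} (cs : CoxeterSystem M W)

local prefix:100 "s " => cs.simple
local prefix:100 "π " => cs.wordProd
local prefix:100 "ℓ " => cs.length
local prefix:100 "ris " => cs.rightInvSeq

noncomputable def simpleParityMap (i : B) : Function.End (W × ZMod 2) :=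
  fun p => (s i * p.1 * s i, p.2 + if p.1 = s i then 1 else 0)

lemma simple_mul_inv_pow_eq_pow_mul_simple (i j : B) (k : ℕ) :
    s j * (s i * s j)⁻¹ ^ k = (s i * s j) ^ k * s j := by
  refine SemiconjBy.pow_right ?_ k
  simp only [SemiconjBy, mul_inv_rev, inv_simple, mul_assoc, simple_mul_simple_cancel_left,
    simple_mul_simple_self, mul_one]

lemma pow_simpleParityMap_mul_apply (i j : B) (k : ℕ) (t : W) (ε : ZMod 2) :
    ((simpleParityMap cs i * simpleParityMap cs j) ^ k) (t, ε) =
      ((s i * s j) ^ k * t * ((s i * s j) ^ k)⁻¹,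
        ε + Nat.count (fun p => t = (s i * s j)⁻¹ ^ p * s j) (2 * k)) := by
  induction k with
  | zero => simp [Function.End.one_def]
  | succ k ih =>
    set r := s i * s j
    have hsj : s j * r⁻¹ ^ k = r ^ k * s j := cs.simple_mul_inv_pow_eq_pow_mul_simple i j k
    have hconj₀ : r ^ k * (r⁻¹ ^ (2 * k) * s j) * (r ^ k)⁻¹ = s j := by
      rw [← inv_pow, mul_assoc, mul_assoc, hsj]
      group
    have hconj₁ : s j * (r ^ k * (r⁻¹ ^ (2 * k + 1) * s j) * (r ^ k)⁻¹) * s j = s i := by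
      rw [← inv_pow, mul_assoc (r ^ k), mul_assoc _ (s j), hsj]
      group
      simp only [r, zpow_neg_one, mul_inv_rev, inv_simple, simple_mul_simple_cancel_right,
        simple_mul_simple_cancel_left]
    rw [pow_succ']
    change simpleParityMap cs i (simpleParityMap cs j
      (((simpleParityMap cs i * simpleParityMap cs j) ^ k) (t, ε))) = _
    rw [ih]
    simp only [simpleParityMap]
    refine Prod.ext ?_ ?_
    · simp only [r, pow_succ', mul_inv_rev, inv_simple, mul_assoc]
    · have hc₀ : (r ^ k * t * (r ^ k)⁻¹ = s j) ↔ t = r⁻¹ ^ (2 * k) * s j := by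
        conv_lhs => rw [← hconj₀]
        simp only [mul_left_inj, mul_right_inj]
      have hc₁ : (s j * (r ^ k * t * (r ^ k)⁻¹) * s j = s i) ↔
          t = r⁻¹ ^ (2 * k + 1) * s j := by
        conv_lhs => rw [← hconj₁]
        simp only [mul_left_inj, mul_right_inj]
      simp only [hc₀, hc₁, show 2 * (k + 1) = 2 * k + 1 + 1 by ring, Nat.count_succ]
      push_cast
      ring

lemma isLiftable_simpleParityMap : M.IsLiftable (simpleParityMap cs) := by
  intro i j
  funext ⟨t, ε⟩
  -- `(sᵢsⱼ) ^ M i j = 1` makes `p ↦ (sᵢsⱼ)⁻ᵖ sⱼ` `M i j`-periodic, so over `p < 2 * M i j`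
  -- every value is hit an even number of times.
  have hcount : Even (Nat.count (fun p => t = (s i * s j)⁻¹ ^ p * s j) (2 * M i j)) := by
    simp only [two_mul, Nat.count_add, pow_add, inv_pow, simple_mul_simple_pow, one_mul]
    exact Even.add_self _
  rw [pow_simpleParityMap_mul_apply, simple_mul_simple_pow,
    ZMod.natCast_eq_zero_iff_even.mpr hcount]
  simp [Function.End.one_def]

noncomputable def parityRep : W →* Function.End (W × ZMod 2) :=
  cs.lift ⟨simpleParityMap cs, cs.isLiftable_simpleParityMap⟩

lemma parityRep_simple (i : B) : cs.parityRep (s i) = simpleParityMap cs i :=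
  cs.lift_apply_simple cs.isLiftable_simpleParityMap i

lemma parityRep_wordProd_apply (ω : List B) (t : W) (ε : ZMod 2) :
    cs.parityRep (π ω) (t, ε) = (π ω * t * (π ω)⁻¹, ε + (ris ω).count t) := by
  induction ω with
  | nil => simp [Function.End.one_def]
  | cons i ω ih =>
    rw [wordProd_cons, map_mul]
    change cs.parityRep (s i) (cs.parityRep (π ω) (t, ε)) = _
    rw [ih, parityRep_simple]
    have hcond : π ω * t * (π ω)⁻¹ = s i ↔ (π ω)⁻¹ * s i * π ω = t := by
      constructor <;> intro h <;> rw [← h] <;> group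
    refine Prod.ext ?_ ?_
    · simp only [simpleParityMap, mul_inv_rev, inv_simple, mul_assoc]
    · simp only [simpleParityMap, rightInvSeq, count_cons, beq_iff_eq, hcond]
      push_cast
      ring

/-- The parity of the number of occurrences of `t` in the right inversion sequence of any word
for `w` (see `parity_wordProd`). -/
noncomputable def parity (w t : W) : ZMod 2 := (cs.parityRep w (t, 0)).2

lemma parity_wordProd (ω : List B) (t : W) : cs.parity (π ω) t = (ris ω).count t := by
  simp [parity, parityRep_wordProd_apply]

lemma parityRep_apply (w t : W) (ε : ZMod 2) :
    cs.parityRep w (t, ε) = (w * t * w⁻¹, ε + cs.parity w t) := by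
  obtain ⟨ω, rfl⟩ := cs.wordProd_surjective w
  rw [parityRep_wordProd_apply, parity_wordProd]

lemma parity_mul (v w t : W) :
    cs.parity (v * w) t = cs.parity w t + cs.parity v (w * t * w⁻¹) := by
  rw [parity, map_mul]
  change (cs.parityRep v (cs.parityRep w (t, 0))).2 = _
  rw [parityRep_apply, parityRep_apply, zero_add]

lemma parity_one (t : W) : cs.parity 1 t = 0 := by
  simp [parity, Function.End.one_def]

lemma parity_self_of_isReflection {t : W} (ht : cs.IsReflection t) : cs.parity t t = 1 := by
  obtain ⟨u, i, rfl⟩ := ht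
  have hcancel := cs.parity_mul u u⁻¹ (u * s i * u⁻¹)
  rw [mul_inv_cancel, parity_one] at hcancel
  have hconj : u⁻¹ * (u * s i * u⁻¹) * u⁻¹⁻¹ = s i := by group
  have hsimple : cs.parity (s i) (s i) = 1 := by
    simp [parity, parityRep_simple, simpleParityMap]
  rw [hconj] at hcancel
  rw [parity_mul, parity_mul, hconj, hsimple, inv_simple, simple_mul_simple_cancel_right]
  linear_combination -hcancel

lemma isRightInversion_of_parity_eq_one {w t : W} (h : cs.parity w t = 1) :
    cs.IsRightInversion w t := by
  obtain ⟨ω, hω, rfl⟩ := cs.exists_isReduced w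
  rw [parity_wordProd] at h
  have hcount : (ris ω).count t ≠ 0 := fun h0 => by simp [h0] at h
  exact cs.isRightInversion_of_mem_rightInvSeq hω
    (count_pos_iff.mp (Nat.pos_of_ne_zero hcount))

theorem mem_rightInvSeq_of_isRightInversion {ω : List B} {t : W}
    (ht : cs.IsRightInversion (π ω) t) : t ∈ ris ω := by
  -- Otherwise `t` would also be a right inversion of `π ω * t`.
  by_contra hmem
  have hparity : cs.parity (π ω * t) t = 1 := by
    rw [parity_mul, parity_self_of_isReflection cs ht.1, mul_inv_cancel_right, parity_wordProd,
      count_eq_zero.mpr hmem, Nat.cast_zero, add_zero]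
  have hlt := (cs.isRightInversion_of_parity_eq_one hparity).2
  rw [mul_assoc, ht.1.mul_self, mul_one] at hlt
  exact lt_asymm hlt ht.2

theorem exists_eraseIdx_of_isRightDescent {ω : List B} {i : B}
    (h : cs.IsRightDescent (π ω) i) :
    ∃ j < ω.length, π ω * s i = π (ω.eraseIdx j) := by
  obtain ⟨j, hj, hget⟩ :=
    getElem_of_mem (cs.mem_rightInvSeq_of_isRightInversion ⟨cs.isReflection_simple i, h⟩)
  refine ⟨j, by simpa using hj, ?_⟩
  rw [← wordProd_mul_getD_rightInvSeq, getD_eq_getElem _ _ hj, hget]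

lemma length_wordProd_eraseIdx_lt {ω : List B} {j : ℕ} (hj : j < ω.length) :
    ℓ (π (ω.eraseIdx j)) < ω.length := by
  have := cs.length_wordProd_le (ω.eraseIdx j)
  rw [length_eraseIdx_of_lt hj] at this
  omega

theorem exchange_append {χ γ : List B} {i : B} (hγ : cs.IsReduced γ)
    (h : cs.IsRightDescent (π (χ ++ γ)) i) :
    (∃ j < χ.length, π (χ ++ γ) * s i = π (χ.eraseIdx j) * π γ) ∨
      cs.IsRightDescent (π γ) i := by
  obtain ⟨j, hj, hexch⟩ := cs.exists_eraseIdx_of_isRightDescent h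
  by_cases hjχ : j < χ.length
  · left
    rw [eraseIdx_append_of_lt_length hjχ, cs.wordProd_append (χ.eraseIdx j)] at hexch
    exact ⟨j, hjχ, hexch⟩
  · right
    rw [eraseIdx_append_of_length_le (not_lt.mp hjχ), wordProd_append, wordProd_append,
      mul_assoc, mul_right_inj] at hexch
    rw [length_append] at hj
    have hlt := cs.length_wordProd_eraseIdx_lt (ω := γ) (j := j - χ.length) (by omega)
    rw [IsRightDescent, hexch, hγ.eq]
    exact hlt

lemma wordProd_mem_closure {A : Set W} {ω : List B} (hω : ∀ i ∈ ω, s i ∈ A) :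
    π ω ∈ Subgroup.closure A :=
  (Subgroup.closure A).list_prod_mem
    (by simpa using fun i hi => Subgroup.subset_closure (hω i hi))

lemma exists_isReduced_wordProd_mul_simple {ω : List B} (hω : cs.IsReduced ω) (i : B) :
    ∃ ω' : List B, cs.IsReduced ω' ∧ ω' ⊆ i :: ω ∧ π ω * s i = π ω' := by
  by_cases hdesc : cs.IsRightDescent (π ω) i
  · obtain ⟨j, hj, hexch⟩ := cs.exists_eraseIdx_of_isRightDescent hdesc
    refine ⟨ω.eraseIdx j, ?_, ((eraseIdx_sublist ω j).trans (sublist_cons_self i ω)).subset,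
      hexch⟩
    rw [IsReduced, ← hexch, length_eraseIdx_of_lt hj]
    rw [isRightDescent_iff, hω.eq] at hdesc
    omega
  · refine ⟨ω ++ [i], ?_, by simp [List.subset_def, or_comm], by simp [wordProd_append]⟩
    rw [not_isRightDescent_iff, hω.eq] at hdesc
    simp [IsReduced, wordProd_append, hdesc]

theorem exists_isReduced_of_mem_closure {A : Set W} (hA : A ⊆ Set.range cs.simple) {w : W}
    (hw : w ∈ Subgroup.closure A) :
    ∃ ω : List B, cs.IsReduced ω ∧ (∀ i ∈ ω, s i ∈ A) ∧ w = π ω := by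
  have step : ∀ ω : List B, cs.IsReduced ω → (∀ i ∈ ω, s i ∈ A) → ∀ i, s i ∈ A →
      ∃ ω' : List B, cs.IsReduced ω' ∧ (∀ i ∈ ω', s i ∈ A) ∧ π ω * s i = π ω' := by
    intro ω hω hωA i hi
    obtain ⟨ω', hω', hsub, he⟩ := cs.exists_isReduced_wordProd_mul_simple hω i
    refine ⟨ω', hω', fun k hk => ?_, he⟩
    rcases mem_cons.mp (hsub hk) with rfl | hk
    exacts [hi, hωA k hk]
  induction hw using Subgroup.closure_induction_right with
  | one => exact ⟨[], by simp [IsReduced], by simp, rfl⟩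
  | mul_right w _ a ha ih =>
    obtain ⟨i, rfl⟩ := hA ha
    obtain ⟨ω, hω, hωA, rfl⟩ := ih
    exact step ω hω hωA i ha
  | mul_inv_cancel w _ a ha ih =>
    obtain ⟨i, rfl⟩ := hA ha
    obtain ⟨ω, hω, hωA, rfl⟩ := ih
    rw [inv_simple]
    exact step ω hω hωA i ha

lemma not_isRightDescent_mul_of_forall_length_le {A : Set W} {x y : W}
    (hx : ∀ v ∈ Subgroup.closure A, ℓ x ≤ ℓ (x * v)) (hy : y ∈ Subgroup.closure A) {i : B}
    (hi : s i ∈ A) (hyi : ¬cs.IsRightDescent y i) : ¬cs.IsRightDescent (x * y) i := by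
  intro hxyi
  obtain ⟨χ, hχ, rfl⟩ := cs.exists_isReduced x
  obtain ⟨γ, hγ, rfl⟩ := cs.exists_isReduced y
  rw [← wordProd_append] at hxyi
  rcases cs.exchange_append hγ hxyi with ⟨j, hj, hexch⟩ | hγi
  · have hle := hx (π γ * s i * (π γ)⁻¹)
      (mul_mem (mul_mem hy (Subgroup.subset_closure hi)) (inv_mem hy))
    rw [← mul_assoc, ← mul_assoc, ← wordProd_append, hexch, mul_inv_cancel_right, hχ.eq] at hle
    exact absurd (cs.length_wordProd_eraseIdx_lt hj) (not_lt.mpr hle)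
  · exact hyi hγi

theorem length_mul_eq_add_of_forall_length_le {A : Set W} (hA : A ⊆ Set.range cs.simple)
    {x y : W} (hx : ∀ v ∈ Subgroup.closure A, ℓ x ≤ ℓ (x * v)) (hy : y ∈ Subgroup.closure A) :
    ℓ (x * y) = ℓ x + ℓ y := by
  have step : ∀ y ∈ Subgroup.closure A, ∀ i, s i ∈ A → ℓ (x * y) = ℓ x + ℓ y →
      ℓ (x * (y * s i)) = ℓ x + ℓ (y * s i) := by
    intro y hy i hi ih
    have hxy := cs.length_mul_simple (x * y) i
    have hle := cs.length_mul_le x (y * s i)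
    rw [← mul_assoc] at hle ⊢
    by_cases hyi : cs.IsRightDescent y i
    · rw [isRightDescent_iff] at hyi
      omega
    · have hxyi := cs.not_isRightDescent_mul_of_forall_length_le hx hy hi hyi
      rw [not_isRightDescent_iff] at hyi hxyi
      omega
  induction hy using Subgroup.closure_induction_right with
  | one => simp
  | mul_right y hy a ha ih =>
    obtain ⟨i, rfl⟩ := hA ha
    exact step y hy i ha ih
  | mul_inv_cancel y hy a ha ih =>
    obtain ⟨i, rfl⟩ := hA ha
    rw [inv_simple]
    exact step y hy i ha ih

theorem length_mul_eq_add_of_forall_length_le' {A : Set W} (hA : A ⊆ Set.range cs.simple)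
    {x z : W} (hx : ∀ v ∈ Subgroup.closure A, ℓ x ≤ ℓ (v * x)) (hz : z ∈ Subgroup.closure A) :
    ℓ (z * x) = ℓ z + ℓ x := by
  have hx' : ∀ v ∈ Subgroup.closure A, ℓ x⁻¹ ≤ ℓ (x⁻¹ * v) := fun v hv => by
    rw [← cs.length_inv (x⁻¹ * v), mul_inv_rev, inv_inv, cs.length_inv]
    exact hx v⁻¹ (inv_mem hv)
  have := cs.length_mul_eq_add_of_forall_length_le hA hx' (inv_mem hz)
  rwa [← mul_inv_rev, cs.length_inv, cs.length_inv, cs.length_inv, add_comm] at this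

lemma length_map_le {B' W' : Type*} [Group W'] {M' : CoxeterMatrix B'}
    (cs' : CoxeterSystem M' W') (φ : W →* W') (hφ : ∀ i, φ (s i) ∈ Set.range cs'.simple)
    (w : W) : cs'.length (φ w) ≤ ℓ w := by
  choose f hf using hφ
  obtain ⟨ω, hω, rfl⟩ := cs.exists_isReduced w
  have hmap : φ (π ω) = cs'.wordProd (ω.map f) := by
    simp [wordProd, map_list_prod, map_map, Function.comp_def, hf]
  calc cs'.length (φ (π ω)) ≤ (ω.map f).length := hmap ▸ cs'.length_wordProd_le _
    _ = ℓ (π ω) := by rw [length_map, hω.eq]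

theorem length_mulEquiv_apply {B' W' : Type*} [Group W'] {M' : CoxeterMatrix B'}
    (cs' : CoxeterSystem M' W') (σ : W ≃* W')
    (hσ : σ '' Set.range cs.simple = Set.range cs'.simple) (w : W) :
    cs'.length (σ w) = ℓ w := by
  refine le_antisymm
    (cs.length_map_le cs' σ (fun i => hσ ▸ Set.mem_image_of_mem σ (Set.mem_range_self i)) w) ?_
  have hσ' : ∀ i, σ.symm (cs'.simple i) ∈ Set.range cs.simple := fun i => by
    obtain ⟨_, ⟨j, rfl⟩, hj⟩ := hσ.symm ▸ Set.mem_range_self i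
    exact ⟨j, by simp [← hj]⟩
  simpa using cs'.length_map_le cs σ.symm hσ' (σ w)

lemma _root_.MulEquiv.symm_apply_mem_closure {G : Type*} [Group G] (σ : G ≃* G) {A : Set G}
    (hA : σ '' A = A) {g : G} (hg : g ∈ Subgroup.closure A) : σ.symm g ∈ Subgroup.closure A := by
  rw [← Subgroup.mem_map_equiv, MonoidHom.map_closure]
  simpa [hA] using hg

def IsMinimalInDoubleCoset (K J : Set W) (x : W) : Prop :=
  ∀ z ∈ Subgroup.closure K, ∀ y ∈ Subgroup.closure J, ℓ x ≤ ℓ (z * x * y)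

namespace IsMinimalInDoubleCoset

variable {cs} {K J : Set W} {x : W}

lemma length_mul_right (hJ : J ⊆ Set.range cs.simple) (hx : cs.IsMinimalInDoubleCoset K J x)
    {y : W} (hy : y ∈ Subgroup.closure J) : ℓ (x * y) = ℓ x + ℓ y :=
  cs.length_mul_eq_add_of_forall_length_le hJ
    (fun v hv => by simpa using hx 1 (one_mem _) v hv) hy

lemma length_mul_left (hK : K ⊆ Set.range cs.simple) (hx : cs.IsMinimalInDoubleCoset K J x)
    {z : W} (hz : z ∈ Subgroup.closure K) : ℓ (z * x) = ℓ z + ℓ x :=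
  cs.length_mul_eq_add_of_forall_length_le' hK
    (fun v hv => by simpa using hx v hv 1 (one_mem _)) hz

lemma eq_of_eq_mul (hK : K ⊆ Set.range cs.simple) {u : W}
    (hx : cs.IsMinimalInDoubleCoset K J x) (hu : cs.IsMinimalInDoubleCoset K J u) {z : W}
    (hz : z ∈ Subgroup.closure K) (h : x = z * u) : u = x := by
  have hle : ℓ x ≤ ℓ u := by
    simpa [h] using hx z⁻¹ (inv_mem hz) 1 (one_mem _)
  have hzu := hu.length_mul_left hK hz
  rw [← h] at hzu
  rw [h, cs.length_eq_zero_iff.mp (by omega : ℓ z = 0), one_mul]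

theorem eq_of_mul_eq_mul (hJ : J ⊆ Set.range cs.simple) (hK : K ⊆ Set.range cs.simple)
    {u : W} (hx : cs.IsMinimalInDoubleCoset K J x) (hu : cs.IsMinimalInDoubleCoset K J u)
    {y z : W} (hy : y ∈ Subgroup.closure J) (hz : z ∈ Subgroup.closure K)
    (h : x * y = z * u) : u = x := by
  obtain ⟨δ, hδ, hδJ, rfl⟩ := cs.exists_isReduced_of_mem_closure hJ hy
  induction δ using reverseRecOn generalizing z with
  | nil => exact hx.eq_of_eq_mul hK hu hz (by simpa using h)
  | append_singleton γ i ih =>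
    have hγ : cs.IsReduced γ := by simpa using hδ.take γ.length
    have hi : s i ∈ J := hδJ i (by simp)
    have hγJ : ∀ k ∈ γ, s k ∈ J := fun k hk => hδJ k (by simp [hk])
    have hγmem := cs.wordProd_mem_closure hγJ
    rw [wordProd_append, wordProd_singleton] at h hy
    obtain ⟨α, -, hαK, rfl⟩ := cs.exists_isReduced_of_mem_closure hK hz
    obtain ⟨β, hβ, rfl⟩ := cs.exists_isReduced u
    have hdesc : cs.IsRightDescent (π (α ++ β)) i := by
      have h₁ := hx.length_mul_right hJ hy
      have h₂ := hx.length_mul_right hJ hγmem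
      have h₃ : ℓ (π γ * s i) = ℓ (π γ) + 1 := by
        simpa [hγ.eq, wordProd_append] using hδ.eq
      rw [IsRightDescent, wordProd_append, ← h, h₁, mul_assoc, simple_mul_simple_cancel_right,
        h₂]
      omega
    rcases cs.exchange_append hβ hdesc with ⟨j, hj, hexch⟩ | hβi
    · refine ih (cs.wordProd_mem_closure fun k hk => hαK k ((eraseIdx_sublist α j).mem hk))
        hγ hγJ hγmem ?_
      rw [← hexch, wordProd_append, ← h, mul_assoc, simple_mul_simple_cancel_right]
    · have := hu 1 (one_mem _) (s i) (Subgroup.subset_closure hi)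
      rw [one_mul] at this
      exact absurd hβi (not_lt.mpr this)

lemma map_mulEquiv (σ : W ≃* W) (hσ : σ '' Set.range cs.simple = Set.range cs.simple)
    (hK : σ '' K = K) (hJ : σ '' J = J) (hx : cs.IsMinimalInDoubleCoset K J x) :
    cs.IsMinimalInDoubleCoset K J (σ x) := by
  intro z hz y hy
  have := hx _ (σ.symm_apply_mem_closure hK hz) _ (σ.symm_apply_mem_closure hJ hy)
  rwa [← cs.length_mulEquiv_apply cs σ hσ, ← cs.length_mulEquiv_apply cs σ hσ (_ * _ * _),
    map_mul, map_mul, MulEquiv.apply_symm_apply, MulEquiv.apply_symm_apply] at this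

end IsMinimalInDoubleCoset

end CoxeterSystem

/-- The Coxeter-combinatorial claim inside the proof of Proposition 6.1: let `σ` be an
automorphism of a Coxeter group `W` permuting the set of simple reflections, and let
`J`, `K` be `σ`-stable subsets of the simple reflections, generating the standard
parabolic subgroups `W_J`, `W_K`. If `x` has minimal length in the double coset
`W_K x W_J`, and `x * y = z * σ x` for some `y ∈ W_J`, `z ∈ W_K`, then `ℓ(y) = ℓ(z)` and
`σ x = x`. -/
theorem stmt_6 {B W : Type*} [Group W] {M : CoxeterMatrix B}
    (cs : CoxeterSystem M W) (σ : W ≃* W)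
    (hσ : σ '' (Set.range cs.simple) = Set.range cs.simple)
    (J K : Set W) (hJ : J ⊆ Set.range cs.simple) (hK : K ⊆ Set.range cs.simple)
    (hJσ : σ '' J = J) (hKσ : σ '' K = K)
    (x : W)
    (hmin : ∀ z ∈ Subgroup.closure K, ∀ y ∈ Subgroup.closure J,
      cs.length x ≤ cs.length (z * x * y))
    (y : W) (hy : y ∈ Subgroup.closure J)
    (z : W) (hz : z ∈ Subgroup.closure K)
    (hxy : x * y = z * σ x) :
    cs.length y = cs.length z ∧ σ x = x := by
  have hx : cs.IsMinimalInDoubleCoset K J x := hmin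
  have hσx := hx.map_mulEquiv σ hσ hKσ hJσ
  refine ⟨?_, hx.eq_of_mul_eq_mul hJ hK hσx hy hz hxy⟩
  have hlen := hx.length_mul_right hJ hy
  rw [hxy, hσx.length_mul_left hK hz, cs.length_mulEquiv_apply cs σ hσ] at hlen
  omega
end
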